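/- For any pair partition π of {1,...,2k}, the number of circles g(π) satisfies g(π) ≤ k + 1. Equivalently, the rank f(π) of the associated linear system satisfies f(π) ≥ k − 1. -/

import Mathlib

open Matrix MeasureTheory
open scoped Kronecker BigOperators

/-- `a i, b i` list the blocks `{a i, b i}` of a pair partition of `{0,...,2k-1}`,
with `a i < b i` and blocks labeled so that `a` is increasing. -/
abbrev IsPairPart (k : ℕ) (a b : Fin k → Fin (2*k)) : Prop :=
  (∀ i, a i < b i) ∧ (∀ i j : Fin k, i < j → a i < a j) ∧
  (∀ i j : Fin k, i ≠ j → a i ≠ a j ∧ a i ≠ b j ∧ b i ≠ b j) ∧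
  (∀ x : Fin (2*k), ∃ i, x = a i ∨ x = b i)

/-- cyclic successor -/
def cyc {n : ℕ} (x : Fin n) : Fin n := ⟨(x.val + 1) % n, Nat.mod_lt _ x.pos⟩

/-- the relation generated by the equations `t_{a i} = t_{cyc (b i)}`, `t_{b i} = t_{cyc (a i)}` -/
def ppRel {k : ℕ} (a b : Fin k → Fin (2*k)) (x y : Fin (2*k)) : Prop :=
  ∃ i, (x = a i ∧ y = cyc (b i)) ∨ (x = b i ∧ y = cyc (a i))

/-- `g(π)`: the number of equivalence classes ("circles") -/
noncomputable def gCircles {k : ℕ} (a b : Fin k → Fin (2*k)) : ℕ :=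
  Nat.card (Quotient (Relation.EqvGen.setoid (ppRel a b)))

/-- coefficient matrix over ℚ of the linear system determined by the pair partition -/
def eqMat {k : ℕ} (a b : Fin k → Fin (2*k)) : Matrix (Fin k ⊕ Fin k) (Fin (2*k)) ℚ :=
  fun e x => match e with
  | Sum.inl i => (if x = a i then 1 else 0) - (if x = cyc (b i) then 1 else 0)
  | Sum.inr i => (if x = b i then 1 else 0) - (if x = cyc (a i) then 1 else 0)

/-- `f(π)`: the rank of the linear system -/
noncomputable def fRank {k : ℕ} (a b : Fin k → Fin (2*k)) : ℕ := (eqMat a b).rank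

/-- noncrossing pair partition -/
def Noncross {k : ℕ} (a b : Fin k → Fin (2*k)) : Prop :=
  ¬ ∃ i j, a i < a j ∧ a j < b i ∧ b i < b j

abbrev PP (k : ℕ) := {p : (Fin k → Fin (2*k)) × (Fin k → Fin (2*k)) // IsPairPart k p.1 p.2}

/-!
The circles are the cycles of `cyc ∘ π`, where `π` is the involution exchanging the two points
of each block. Written as a product of the `k` transpositions `(a i, b i)`, `π` is reached from
the identity in `k` steps, and composing a map with a transposition raises the number of its
cycles by at most one (undoing it adds a single edge, which merges at most two classes). Since
`cyc` has one cycle, `g ≤ k + 1`. Every solution of the linear system is constant on circles, so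
its kernel has dimension at most `g` and `f ≥ 2k - g ≥ k - 1`.
-/

open Relation

noncomputable def numEqvClasses {α : Type*} (r : α → α → Prop) : ℕ :=
  Nat.card (Quotient (EqvGen.setoid r))

section EqvClasses

variable {α : Type*}

theorem eqvGen_adjoin_edge {r : α → α → Prop} {x y u v : α}
    (h : EqvGen (fun p q => r p q ∨ p = x ∧ q = y) u v) :
    EqvGen r u v ∨ (EqvGen r u x ∧ EqvGen r y v) ∨ (EqvGen r u y ∧ EqvGen r x v) := by
  induction h with
  | rel p q hpq =>
    rcases hpq with hpq | ⟨rfl, rfl⟩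
    · exact .inl (.rel _ _ hpq)
    · exact .inr (.inl ⟨.refl _, .refl _⟩)
  | refl p => exact .inl (.refl p)
  | symm p q _ ih => grind [EqvGen.symm]
  | trans p q w _ _ ih₁ ih₂ => grind [EqvGen.trans, EqvGen.symm]

variable [Finite α]

theorem numEqvClasses_le_of_le_eqvGen {r s : α → α → Prop}
    (h : ∀ x y, r x y → EqvGen s x y) : numEqvClasses s ≤ numEqvClasses r :=
  Nat.card_le_card_of_surjective (Setoid.map_of_le (Setoid.eqvGen_le h))
    (Quotient.ind fun x => ⟨Quotient.mk _ x, rfl⟩)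

theorem numEqvClasses_le_adjoin_edge_add_one (r : α → α → Prop) (x y : α) :
    numEqvClasses r ≤ numEqvClasses (fun p q => r p q ∨ p = x ∧ q = y) + 1 := by
  set φ := Setoid.map_of_le (Setoid.eqvGen_mono (r := r)
    (s := fun p q => r p q ∨ p = x ∧ q = y) fun _ _ => .inl)
  -- the only classes of `r` that the new edge can merge are those of `x` and `y`
  have hinj : Set.InjOn φ {Quotient.mk _ y}ᶜ := by
    rintro ⟨u⟩ hu ⟨v⟩ hv huv
    have hu : ¬EqvGen r u y := fun h => hu (Quotient.sound h)
    have hv : ¬EqvGen r v y := fun h => hv (Quotient.sound h)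
    rcases eqvGen_adjoin_edge (Quotient.exact huv) with h | ⟨-, h⟩ | ⟨h, -⟩
    · exact Quotient.sound h
    · exact absurd h.symm hv
    · exact absurd h hu
  have := Set.ncard_le_ncard_of_injOn φ (Set.mapsTo_univ _ _) hinj Set.finite_univ
  rw [Set.ncard_univ, Set.ncard_compl, Set.ncard_singleton] at this
  unfold numEqvClasses
  omega

variable [DecidableEq α]

theorem numEqvClasses_comp_swap_le (σ : α → α) (x y : α) :
    numEqvClasses (fun u v => v = σ (Equiv.swap x y u)) ≤
      numEqvClasses (fun u v => v = σ u) + 1 := by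
  refine (numEqvClasses_le_adjoin_edge_add_one _ x y).trans (Nat.add_le_add_right ?_ 1)
  refine numEqvClasses_le_of_le_eqvGen ?_
  rintro z _ rfl
  -- with the edge `x — y` added, `z` is linked to `swap x y z`, whose image is `σ z`
  have hz : EqvGen (fun p q => q = σ (Equiv.swap x y p) ∨ p = x ∧ q = y)
      z (Equiv.swap x y z) := by
    rcases eq_or_ne z x with rfl | hzx
    · simpa using EqvGen.rel _ _ (.inr ⟨rfl, rfl⟩)
    rcases eq_or_ne z y with rfl | hzy
    · simpa using EqvGen.symm _ _ (EqvGen.rel _ _ (.inr ⟨rfl, rfl⟩))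
    rw [Equiv.swap_apply_of_ne_of_ne hzx hzy]
    exact .refl z
  exact hz.trans _ _ _ (.rel _ _ (.inl (by simp)))

theorem numEqvClasses_comp_prod_swap_le (σ : α → α) (l : List (α × α)) :
    numEqvClasses (fun u v => v = σ ((l.map fun p => Equiv.swap p.1 p.2).prod u)) ≤
      numEqvClasses (fun u v => v = σ u) + l.length := by
  induction l generalizing σ with
  | nil => simp
  | cons p l ih =>
    simpa [add_assoc, add_comm 1] using
      (ih (σ ∘ Equiv.swap p.1 p.2)).trans
        (Nat.add_le_add_right (numEqvClasses_comp_swap_le σ p.1 p.2) _)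

end EqvClasses

section SwapProduct

variable {α : Type*} [DecidableEq α]

theorem prod_map_swap_apply_of_forall_ne {l : List (α × α)} {x : α}
    (hx : ∀ p ∈ l, x ≠ p.1 ∧ x ≠ p.2) :
    (l.map fun p => Equiv.swap p.1 p.2).prod x = x := by
  induction l with
  | nil => rfl
  | cons p l ih =>
    obtain ⟨hx₁, hx₂⟩ := hx p List.mem_cons_self
    simp [ih fun q hq => hx q (List.mem_cons_of_mem p hq), Equiv.swap_apply_of_ne_of_ne hx₁ hx₂]

theorem prod_map_swap_apply_of_mem {l : List (α × α)}
    (hl : l.Pairwise fun p q => p.1 ≠ q.1 ∧ p.1 ≠ q.2 ∧ p.2 ≠ q.1 ∧ p.2 ≠ q.2)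
    {x y : α} (hxy : (x, y) ∈ l ∨ (y, x) ∈ l) :
    (l.map fun p => Equiv.swap p.1 p.2).prod x = y := by
  induction l with
  | nil => simp at hxy
  | cons p l ih =>
    rw [List.pairwise_cons] at hl
    rw [List.mem_cons, List.mem_cons] at hxy
    simp only [List.map_cons, List.prod_cons, Equiv.Perm.mul_apply]
    rcases hxy with (rfl | hxy) | (rfl | hyx)
    · rw [prod_map_swap_apply_of_forall_ne fun q hq => ⟨(hl.1 q hq).1, (hl.1 q hq).2.1⟩]
      exact Equiv.swap_apply_left _ _
    · rw [ih hl.2 (.inl hxy)]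
      have := hl.1 _ hxy
      exact Equiv.swap_apply_of_ne_of_ne this.2.1.symm this.2.2.2.symm
    · rw [prod_map_swap_apply_of_forall_ne fun q hq => ⟨(hl.1 q hq).2.2.1, (hl.1 q hq).2.2.2⟩]
      exact Equiv.swap_apply_right _ _
    · rw [ih hl.2 (.inr hyx)]
      have := hl.1 _ hyx
      exact Equiv.swap_apply_of_ne_of_ne this.1.symm this.2.2.1.symm

end SwapProduct

theorem Matrix.card_le_rank_add_numEqvClasses {K m n : Type*} [Field K] [Fintype m] [Fintype n]
    (M : Matrix m n K) (r : n → n → Prop)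
    (h : ∀ v, M *ᵥ v = 0 → ∀ x y, r x y → v x = v y) :
    Fintype.card n ≤ M.rank + numEqvClasses r := by
  let s := EqvGen.setoid r
  have := Fintype.ofFinite (Quotient s)
  have hker :
      LinearMap.ker M.mulVecLin ≤ LinearMap.range (LinearMap.funLeft K K (Quotient.mk s)) :=
    fun v hv => ⟨Quotient.lift v fun _ _ hxy => Setoid.eqvGen_le (s := Setoid.ker v) (h v hv) hxy,
      rfl⟩
  calc Fintype.card n = M.rank + Module.finrank K (LinearMap.ker M.mulVecLin) := by
        rw [Matrix.rank, LinearMap.finrank_range_add_finrank_ker,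
          Module.finrank_fintype_fun_eq_card]
    _ ≤ M.rank + Module.finrank K (Quotient s → K) :=
        Nat.add_le_add_left ((Submodule.finrank_mono hker).trans (LinearMap.finrank_range_le _)) _
    _ = M.rank + numEqvClasses r := by
        rw [Module.finrank_fintype_fun_eq_card, numEqvClasses, Nat.card_eq_fintype_card]

section PairPartition

variable {k : ℕ} {a b : Fin k → Fin (2*k)}

def pairSwaps (a b : Fin k → Fin (2*k)) : List (Fin (2*k) × Fin (2*k)) :=
  List.ofFn fun i => (a i, b i)

def pairing (a b : Fin k → Fin (2*k)) : Equiv.Perm (Fin (2*k)) :=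
  ((pairSwaps a b).map fun p => Equiv.swap p.1 p.2).prod

theorem pairSwaps_pairwise_disjoint (h : IsPairPart k a b) :
    (pairSwaps a b).Pairwise fun p q =>
      p.1 ≠ q.1 ∧ p.1 ≠ q.2 ∧ p.2 ≠ q.1 ∧ p.2 ≠ q.2 := by
  refine List.pairwise_ofFn.mpr fun i j hij => ?_
  obtain ⟨h₁, h₂, h₃⟩ := h.2.2.1 i j hij.ne
  exact ⟨h₁, h₂, (h.2.2.1 j i hij.ne').2.1.symm, h₃⟩

theorem pairing_apply_left (h : IsPairPart k a b) (i : Fin k) : pairing a b (a i) = b i :=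
  prod_map_swap_apply_of_mem (pairSwaps_pairwise_disjoint h) (.inl (List.mem_ofFn.mpr ⟨i, rfl⟩))

theorem pairing_apply_right (h : IsPairPart k a b) (i : Fin k) : pairing a b (b i) = a i :=
  prod_map_swap_apply_of_mem (pairSwaps_pairwise_disjoint h) (.inr (List.mem_ofFn.mpr ⟨i, rfl⟩))

theorem ppRel_iff (h : IsPairPart k a b) (u v : Fin (2*k)) :
    ppRel a b u v ↔ v = cyc (pairing a b u) := by
  constructor
  · rintro ⟨i, ⟨rfl, rfl⟩ | ⟨rfl, rfl⟩⟩
    · rw [pairing_apply_left h]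
    · rw [pairing_apply_right h]
  · rintro rfl
    obtain ⟨i, rfl | rfl⟩ := h.2.2.2 u
    · exact ⟨i, .inl ⟨rfl, by rw [pairing_apply_left h]⟩⟩
    · exact ⟨i, .inr ⟨rfl, by rw [pairing_apply_right h]⟩⟩

theorem numEqvClasses_cyc_le_one (n : ℕ) :
    numEqvClasses (fun u v : Fin n => v = cyc u) ≤ 1 := by
  refine Finite.card_le_one_iff_subsingleton.mpr ⟨Quotient.ind₂ fun u v => Quotient.sound ?_⟩
  obtain ⟨m, rfl⟩ := Nat.exists_eq_succ_of_ne_zero u.pos.ne'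
  have hzero : ∀ w : Fin (m + 1), EqvGen (fun u v : Fin (m + 1) => v = cyc u) 0 w := by
    refine Fin.induction (.refl 0) fun i hi => hi.trans _ _ _ (.rel _ _ ?_)
    ext
    simp [cyc, Nat.mod_eq_of_lt (Nat.succ_lt_succ i.isLt)]
  exact (hzero u).symm.trans _ _ _ (hzero v)

theorem gCircles_le (h : IsPairPart k a b) : gCircles a b ≤ k + 1 := by
  have hrel : ppRel a b = fun u v => v = cyc (pairing a b u) := by
    ext u v
    exact ppRel_iff h u v
  calc gCircles a b = numEqvClasses fun u v => v = cyc (pairing a b u) := by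
        rw [gCircles, hrel, numEqvClasses]
    _ ≤ numEqvClasses (fun u v : Fin (2*k) => v = cyc u) + (pairSwaps a b).length :=
        numEqvClasses_comp_prod_swap_le cyc _
    _ ≤ k + 1 := by
        rw [pairSwaps, List.length_ofFn]
        linarith [numEqvClasses_cyc_le_one (2*k)]

theorem eqMat_mulVec_inl (v : Fin (2*k) → ℚ) (i : Fin k) :
    (eqMat a b *ᵥ v) (.inl i) = v (a i) - v (cyc (b i)) := by
  simp [eqMat, Matrix.mulVec, dotProduct, sub_mul]

theorem eqMat_mulVec_inr (v : Fin (2*k) → ℚ) (i : Fin k) :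
    (eqMat a b *ᵥ v) (.inr i) = v (b i) - v (cyc (a i)) := by
  simp [eqMat, Matrix.mulVec, dotProduct, sub_mul]

theorem two_mul_le_fRank_add_gCircles : 2 * k ≤ fRank a b + gCircles a b := by
  have := (eqMat a b).card_le_rank_add_numEqvClasses (ppRel a b) fun v hv => by
    rintro _ _ ⟨i, ⟨rfl, rfl⟩ | ⟨rfl, rfl⟩⟩
    · simpa [eqMat_mulVec_inl, sub_eq_zero] using congrFun hv (.inl i)
    · simpa [eqMat_mulVec_inr, sub_eq_zero] using congrFun hv (.inr i)
  rwa [Fintype.card_fin] at this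

end PairPartition

theorem circles_le_succ (k : ℕ) (a b : Fin k → Fin (2*k))
    (h : IsPairPart k a b) :
    gCircles a b ≤ k + 1 ∧ k - 1 ≤ fRank a b := by
  have hg := gCircles_le h
  have hfg := two_mul_le_fRank_add_gCircles (a := a) (b := b)
  exact ⟨hg, by omega⟩
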